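/- Let A be a connected graph with universal covering tree T = T_A and universal covering morphism π : T → A. Let γ, γ' be vertices of T and set q := π₀(γ), q' := π₀(γ'). Then for every isomorphism g₀ : A_q → A_{q'} of rooted graphs there exists a unique isomorphism g : T_γ → T_{γ'} of rooted trees such that π ∘ g = g₀ ∘ π on T_γ, i.e. π₀(g(v)) = g₀(π₀(v)) for every vertex v of T_γ and π₁(g(e)) = g₀(π₁(e)) for every edge e of T_γ. -/

import Mathlib

/-- A rooted directed multigraph. -/
structure RGraph where
  V : Type
  E : Type
  s : E → V
  t : E → V
  root : V

namespace RGraph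

/-- `l` is a path: consecutive edges are composable. -/
def IsPath (A : RGraph) (l : List A.E) : Prop :=
  l.Chain' (fun e f => A.t e = A.s f)

/-- `l` is a path starting at the vertex `q`. -/
def PathFrom (A : RGraph) (q : A.V) (l : List A.E) : Prop :=
  A.IsPath l ∧ ∀ e ∈ l.head?, A.s e = q

/-- The target of the path `l` started at `q` (equal to `q` for the empty path). -/
def pathTarget (A : RGraph) (q : A.V) (l : List A.E) : A.V :=
  l.foldl (fun _ e => A.t e) q

@[simp] lemma pathTarget_nil (A : RGraph) (q : A.V) : A.pathTarget q [] = q := rfl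

@[simp] lemma pathTarget_cons (A : RGraph) (q : A.V) (a : A.E) (l : List A.E) :
    A.pathTarget q (a :: l) = A.pathTarget (A.t a) l := rfl

lemma pathTarget_append (A : RGraph) (q : A.V) (l l' : List A.E) :
    A.pathTarget q (l ++ l') = A.pathTarget (A.pathTarget q l) l' := by
  simp [pathTarget]

@[simp] lemma pathTarget_append_single (A : RGraph) (q : A.V) (l : List A.E) (e : A.E) :
    A.pathTarget q (l ++ [e]) = A.t e := by
  rw [pathTarget_append]; rfl

lemma pathFrom_nil (A : RGraph) (q : A.V) : A.PathFrom q [] :=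
  ⟨List.isChain_nil, by simp⟩

lemma pathTarget_getLast {A : RGraph} {q : A.V} {l : List A.E} {x : A.E}
    (hx : x ∈ l.getLast?) : A.pathTarget q l = A.t x := by
  induction l generalizing q with
  | nil => simp at hx
  | cons a l ih =>
    cases l with
    | nil => simp at hx; subst hx; rfl
    | cons b l =>
      rw [List.getLast?_cons_cons] at hx
      simpa using ih (q := A.t a) hx

lemma pathFrom_append_single {A : RGraph} {q : A.V} {l : List A.E} {e : A.E}
    (h : A.PathFrom q l) (he : A.s e = A.pathTarget q l) :
    A.PathFrom q (l ++ [e]) := by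
  constructor
  · apply List.isChain_append.mpr
    refine ⟨h.1, List.isChain_singleton _, ?_⟩
    intro x hx y hy
    simp at hy
    subst hy
    rw [he]
    exact (pathTarget_getLast hx).symm
  · intro f hf
    cases l with
    | nil =>
      simp at hf
      subst hf
      simpa using he
    | cons a l =>
      simp at hf
      subst hf
      exact h.2 a (by simp)

/-- `w` is reachable from `q` by an oriented path. -/
def Reach (A : RGraph) (q w : A.V) : Prop :=
  ∃ l, A.PathFrom q l ∧ A.pathTarget q l = w

lemma reach_self (A : RGraph) (q : A.V) : A.Reach q q :=
  ⟨[], A.pathFrom_nil q, rfl⟩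

lemma reach_target {A : RGraph} {q : A.V} {e : A.E} (h : A.Reach q (A.s e)) :
    A.Reach q (A.t e) := by
  obtain ⟨l, hl, ht⟩ := h
  exact ⟨l ++ [e], pathFrom_append_single hl ht.symm, by simp⟩

/-- A graph is connected (as a rooted directed graph) if every vertex is reachable
from the root. -/
def Connected (A : RGraph) : Prop := ∀ w : A.V, A.Reach A.root w

/-- A graph is a tree if the target map from paths emanating from the root to
vertices is a bijection. -/
def IsTree (A : RGraph) : Prop :=
  Function.Bijective
    (fun l : {l : List A.E // A.PathFrom A.root l} => A.pathTarget A.root l.1)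

/-- A graph is locally finite if every vertex has finitely many outgoing edges. -/
def LocallyFinite (A : RGraph) : Prop := ∀ q : A.V, Finite {e : A.E // A.s e = q}

/-- Adjacency: there is an edge from `v` to `w`. -/
def Adj (A : RGraph) (v w : A.V) : Prop := ∃ e, A.s e = v ∧ A.t e = w

/-- The induced rooted subgraph on all vertices reachable from `q` (the "cone" at `q`). -/
def subgraph (A : RGraph) (q : A.V) : RGraph where
  V := {w // A.Reach q w}
  E := {e // A.Reach q (A.s e)}
  s := fun e => ⟨A.s e.1, e.2⟩
  t := fun e => ⟨A.t e.1, reach_target e.2⟩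
  root := ⟨q, A.reach_self q⟩

/-- The truncation of the cone at `v` to vertices at distance at most `d` from `v`. -/
def trunc (A : RGraph) (v : A.V) (d : ℕ) : RGraph where
  V := {w // ∃ l, A.PathFrom v l ∧ A.pathTarget v l = w ∧ l.length ≤ d}
  E := {e // ∃ l, A.PathFrom v l ∧ A.pathTarget v l = A.s e ∧ l.length < d}
  s := fun e => ⟨A.s e.1, e.2.imp fun _ h => ⟨h.1, h.2.1, h.2.2.le⟩⟩
  t := fun e => ⟨A.t e.1, by
    obtain ⟨l, h1, h2, h3⟩ := e.2
    exact ⟨l ++ [e.1], pathFrom_append_single h1 h2.symm, by simp,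
      by simp only [List.length_append, List.length_singleton]; omega⟩⟩
  root := ⟨v, [], A.pathFrom_nil v, rfl, Nat.zero_le d⟩

/-- The universal covering tree of `A`: vertices are the paths emanating from the root. -/
def cover (A : RGraph) : RGraph where
  V := {l : List A.E // A.PathFrom A.root l}
  E := {x : {l : List A.E // A.PathFrom A.root l} × A.E //
          A.s x.2 = A.pathTarget A.root x.1.1}
  s := fun x => x.1.1
  t := fun x => ⟨x.1.1.1 ++ [x.1.2], pathFrom_append_single x.1.1.2 x.2⟩
  root := ⟨[], A.pathFrom_nil _⟩

end RGraph

/-- A morphism of rooted directed multigraphs. -/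
structure GraphHom (A B : RGraph) where
  v : A.V → B.V
  e : A.E → B.E
  root_eq : v A.root = B.root
  s_eq : ∀ x, B.s (e x) = v (A.s x)
  t_eq : ∀ x, B.t (e x) = v (A.t x)

namespace GraphHom

variable {A B : RGraph}

/-- The unique path lifting property. -/
def UPLP (p : GraphHom A B) : Prop :=
  ∀ (q : A.V) (l' : List B.E), B.PathFrom (p.v q) l' →
    ∃! l : List A.E, A.PathFrom q l ∧ l.map p.e = l'

/-- A covering morphism: surjective on vertices, with the unique path lifting property. -/
def IsCovering (p : GraphHom A B) : Prop := Function.Surjective p.v ∧ p.UPLP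

/-- An isomorphism of graphs: bijective on vertices and on edges. -/
def IsIso (p : GraphHom A B) : Prop := Function.Bijective p.v ∧ Function.Bijective p.e

/-- The restriction of the edge map to the edges emanating from `q`. -/
def outMap (p : GraphHom A B) (q : A.V) :
    {e : A.E // A.s e = q} → {e' : B.E // B.s e' = p.v q} :=
  fun e => ⟨p.e e.1, by rw [p.s_eq, e.2]⟩

lemma isPath_map (p : GraphHom A B) {l : List A.E} (h : A.IsPath l) :
    B.IsPath (l.map p.e) := by
  rw [RGraph.IsPath]
  show List.IsChain _ (l.map p.e)
  rw [List.isChain_map]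
  exact List.IsChain.imp (fun a b hab => by rw [p.t_eq, p.s_eq, hab]) h

lemma pathFrom_map (p : GraphHom A B) {q : A.V} {l : List A.E} (h : A.PathFrom q l) :
    B.PathFrom (p.v q) (l.map p.e) := by
  refine ⟨p.isPath_map h.1, ?_⟩
  intro f hf
  cases l with
  | nil => simp at hf
  | cons a l =>
    simp at hf
    subst hf
    rw [p.s_eq, h.2 a (by simp)]

lemma pathTarget_map (p : GraphHom A B) (q : A.V) (l : List A.E) :
    B.pathTarget (p.v q) (l.map p.e) = p.v (A.pathTarget q l) := by
  induction l generalizing q with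
  | nil => rfl
  | cons a l ih =>
    show B.pathTarget (B.t (p.e a)) (l.map p.e) = _
    rw [p.t_eq]
    exact ih (A.t a)

lemma reach_map (p : GraphHom A B) {q w : A.V} (h : A.Reach q w) :
    B.Reach (p.v q) (p.v w) := by
  obtain ⟨l, hl, ht⟩ := h
  exact ⟨l.map p.e, p.pathFrom_map hl, by rw [p.pathTarget_map, ht]⟩

end GraphHom

/-- Two graphs are isomorphic. -/
def RGraph.Iso (A B : RGraph) : Prop := ∃ p : GraphHom A B, p.IsIso

/-- The universal covering morphism from the universal covering tree of `A` to `A`. -/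
def RGraph.uCover (A : RGraph) : GraphHom A.cover A where
  v := fun l => A.pathTarget A.root l.1
  e := fun x => x.1.2
  root_eq := rfl
  s_eq := fun x => x.2
  t_eq := fun x => by
    show A.t x.1.2 = A.pathTarget A.root (x.1.1.1 ++ [x.1.2])
    simp

/-- The morphism induced between universal covering trees by a morphism of graphs. -/
def GraphHom.coverMap {A B : RGraph} (p : GraphHom A B) : GraphHom A.cover B.cover where
  v := fun l => ⟨l.1.map p.e, by have := p.pathFrom_map l.2; rwa [p.root_eq] at this⟩
  e := fun x =>
    ⟨(⟨x.1.1.1.map p.e, by have := p.pathFrom_map x.1.1.2; rwa [p.root_eq] at this⟩,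
      p.e x.1.2), by
        show B.s (p.e x.1.2) = B.pathTarget B.root (x.1.1.1.map p.e)
        rw [p.s_eq, x.2, ← p.root_eq, p.pathTarget_map]⟩
  root_eq := Subtype.ext rfl
  s_eq := fun _ => rfl
  t_eq := fun x => by
    apply Subtype.ext
    simp [RGraph.cover]

/-- `A` is a covering quotient of `T`. -/
def IsCovQuotient (T A : RGraph) : Prop := ∃ p : GraphHom T A, p.IsCovering

/-- `A` is a minimal covering quotient of `T`: a covering quotient with the minimal
number of vertices among all covering quotients of `T`. -/
def IsMinCovQuotient (T A : RGraph) : Prop :=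
  IsCovQuotient T A ∧
    ∀ B : RGraph, IsCovQuotient T B → Cardinal.mk A.V ≤ Cardinal.mk B.V

/-- `T` has finitely many cone types. -/
def FinManyCones (T : RGraph) : Prop :=
  ∃ S : Set T.V, S.Finite ∧ ∀ v : T.V, ∃ w ∈ S, RGraph.Iso (T.subgraph v) (T.subgraph w)

/-- A self-similar tree: a locally finite tree with finitely many cone types. -/
def SelfSimilarTree (T : RGraph) : Prop := T.IsTree ∧ T.LocallyFinite ∧ FinManyCones T

namespace RGraph

/-- The automorphism group of a graph, realized as the group of root-preserving,
adjacency-preserving permutations of the vertex set (for trees this is the same as the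
automorphism group in the sense of graph morphisms, since in a tree an edge is determined
by its endpoints). -/
def autGroup (T : RGraph) : Subgroup (Equiv.Perm T.V) where
  carrier := {g | g T.root = T.root ∧ ∀ v w, T.Adj v w ↔ T.Adj (g v) (g w)}
  one_mem' := ⟨rfl, fun _ _ => Iff.rfl⟩
  mul_mem' := by
    rintro a b ⟨ha1, ha2⟩ ⟨hb1, hb2⟩
    refine ⟨?_, fun v w => ?_⟩
    · show a (b T.root) = T.root
      rw [hb1, ha1]
    · exact (hb2 v w).trans (ha2 (b v) (b w))
  inv_mem' := by
    rintro a ⟨ha1, ha2⟩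
    refine ⟨?_, fun v w => ?_⟩
    · show a.symm T.root = T.root
      rw [Equiv.symm_apply_eq]
      exact ha1.symm
    · have h := ha2 (a⁻¹ v) (a⁻¹ w)
      simpa using h.symm

/-- The subgroup of permutations of the vertices fixing every vertex outside
of the cone at `v`. -/
def fixOutside (T : RGraph) (v : T.V) : Subgroup (Equiv.Perm T.V) where
  carrier := {g | ∀ w, ¬ T.Reach v w → g w = w}
  one_mem' := fun _ _ => rfl
  mul_mem' := by
    intro a b ha hb w hw
    show a (b w) = w
    rw [hb w hw, ha w hw]
  inv_mem' := by
    intro a ha w hw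
    show a.symm w = w
    rw [Equiv.symm_apply_eq]
    exact (ha w hw).symm

/-- The rigid stabilizer of the vertex `v`: automorphisms fixing every vertex
outside the subtree spanned by `v` and its descendants. -/
def rist (T : RGraph) (v : T.V) : Subgroup (Equiv.Perm T.V) :=
  T.autGroup ⊓ T.fixOutside v

/-- The set of vertices at distance `n` from the root. -/
def level (T : RGraph) (n : ℕ) : Set T.V :=
  {v | ∃ l : List T.E, T.PathFrom T.root l ∧ T.pathTarget T.root l = v ∧ l.length = n}

/-- The `n`-th rigid level stabilizer: the subgroup generated by the rigid stabilizers
of the vertices at distance `n` from the root. -/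
def ristLevel (T : RGraph) (n : ℕ) : Subgroup (Equiv.Perm T.V) :=
  ⨆ v ∈ T.level n, T.rist v

/-- The `n`-th rigid level stabilizer, as a subgroup of the automorphism group. -/
def ristIn (T : RGraph) (n : ℕ) : Subgroup ↥T.autGroup :=
  (T.ristLevel n).comap T.autGroup.subtype

end RGraph

/-- A recurrent double edge: a pair of distinct parallel edges such that there is an
oriented loop which contains one of them, or from which their common source can be
reached. -/
def HasRecDoubleEdge (A : RGraph) : Prop :=
  ∃ e₁ e₂ : A.E, e₁ ≠ e₂ ∧ A.s e₁ = A.s e₂ ∧ A.t e₁ = A.t e₂ ∧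
    ((∃ (q : A.V) (l : List A.E),
        A.PathFrom q l ∧ l ≠ [] ∧ A.pathTarget q l = q ∧ (e₁ ∈ l ∨ e₂ ∈ l)) ∨
     (∃ (q : A.V) (l : List A.E),
        A.PathFrom q l ∧ l ≠ [] ∧ A.pathTarget q l = q ∧ A.Reach q (A.s e₁)))

/-- A deterministic finite automaton over the alphabet `A`, with a partial transition
function, a single initial state, and all states accepting. -/
structure PDFA (A : Type) where
  Q : Type
  finQ : Finite Q
  neQ : Nonempty Q
  δ : Q → A → Option Q
  init : Q

namespace PDFA

variable {A : Type} (M : PDFA A)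

/-- Running the automaton from state `q` on a word; `none` if it gets stuck. -/
def run : M.Q → List A → Option M.Q
  | q, [] => some q
  | q, a :: w => (M.δ q a).bind fun q' => run q' w

/-- The regular language accepted by `M`. -/
def Lang : Set (List A) := {w | (M.run M.init w).isSome}

lemma run_append (q : M.Q) (u w : List A) :
    M.run q (u ++ w) = (M.run q u).bind fun q' => M.run q' w := by
  induction u generalizing q with
  | nil => simp [run]
  | cons a u ih =>
    simp only [List.cons_append, run]
    cases M.δ q a with
    | none => simp
    | some q' => simp [ih]

lemma isSome_of_append {q : M.Q} {u w : List A}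
    (h : (M.run q (u ++ w)).isSome) : (M.run q u).isSome := by
  rw [run_append] at h
  cases hu : M.run q u with
  | none => rw [hu] at h; simp at h
  | some q' => simp

/-- The path language tree of `M`: the tree whose vertices are the words of the
language of `M`, with an edge from `w` to `w ++ [a]` whenever both belong to the
language. -/
def pathTree : RGraph where
  V := {w : List A // (M.run M.init w).isSome}
  E := {x : List A × A // (M.run M.init (x.1 ++ [x.2])).isSome}
  s := fun x => ⟨x.1.1, M.isSome_of_append x.2⟩
  t := fun x => ⟨x.1.1 ++ [x.1.2], x.2⟩
  root := ⟨[], by simp [run]⟩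

/-- The underlying rooted directed multigraph of the automaton `M`. -/
def underlying : RGraph where
  V := M.Q
  E := {x : M.Q × A // (M.δ x.1 x.2).isSome}
  s := fun x => x.1.1
  t := fun x => (M.δ x.1.1 x.1.2).get x.2
  root := M.init

/-- `M` is geometrically minimal: it has the minimal number of states among all DFAs
(over arbitrary finite nonempty alphabets) whose path language trees are isomorphic,
as unlabelled rooted trees, to the path language tree of `M`. -/
def GeomMinimal : Prop :=
  ∀ (B : Type), Finite B → Nonempty B → ∀ N : PDFA B,
    RGraph.Iso M.pathTree N.pathTree → Nat.card M.Q ≤ Nat.card N.Q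

/-- The state reached after reading the word `w` of the language. -/
def qstate (w : List A) (h : (M.run M.init w).isSome) : M.Q :=
  (M.run M.init w).get h

/-- The group of admissible permutations at the state `q`: permutations `τ` of the
alphabet fixing the letters outside `Σ(q)` and satisfying `δ(q, τ a) = δ(q, a)`. -/
def SymQ (q : M.Q) : Subgroup (Equiv.Perm A) where
  carrier := {τ | ∀ a, M.δ q (τ a) = M.δ q a ∧ (M.δ q a = none → τ a = a)}
  one_mem' := fun _ => ⟨rfl, fun _ => rfl⟩
  mul_mem' := by
    intro τ₁ τ₂ h1 h2 a
    constructor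
    · show M.δ q (τ₁ (τ₂ a)) = M.δ q a
      rw [(h1 (τ₂ a)).1, (h2 a).1]
    · intro hn
      show τ₁ (τ₂ a) = a
      rw [(h2 a).2 hn, (h1 a).2 hn]
  inv_mem' := by
    intro τ h a
    have h1 := (h (τ.symm a)).1
    rw [Equiv.apply_symm_apply] at h1
    constructor
    · show M.δ q (τ.symm a) = M.δ q a
      exact h1.symm
    · intro hn
      have h2 := (h (τ.symm a)).2 (h1.symm.trans hn)
      rw [Equiv.apply_symm_apply] at h2
      show τ.symm a = a
      exact h2.symm

end PDFA

/-- Extending a portrait to a map on words (the first argument is the accumulated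
prefix): the `i`-th letter of the image word is the image of the `i`-th letter under
the local injection at the prefix of length `i - 1`. -/
def portraitExtend {A : Type} (σ : List A → A → A) : List A → List A → List A
  | _, [] => []
  | pre, a :: w => σ pre a :: portraitExtend σ (pre ++ [a]) w

/-!
Identify the vertices of the cone `T_γ` with the paths `γ ++ m`, where `m` is a path of `A`
starting at `π γ`; all edges of such an `m` lie in the cone `A_{π γ}`. The lift is then
`γ ++ m ↦ γ' ++ g₀(m)`, with `g₀` applied edgewise. Since `T_γ` is connected and an edge of
`T_{γ'}` is determined by its source and its image under `π`, a morphism `T_γ → T_{γ'}` is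
determined by `π ∘ g` on edges; this gives uniqueness, and with it functoriality of the lift,
so the lift of the inverse of `g₀` is an inverse of the lift.
-/

namespace RGraph

variable {A : RGraph}

lemma pathFrom_cons_iff {q : A.V} {a : A.E} {m : List A.E} :
    A.PathFrom q (a :: m) ↔ A.s a = q ∧ A.PathFrom (A.t a) m := by
  constructor
  · rintro ⟨hc, hh⟩
    change List.IsChain _ _ at hc
    rw [List.isChain_cons] at hc
    exact ⟨hh a rfl, hc.2, fun e he => (hc.1 e he).symm⟩
  · rintro ⟨ha, hc, hh⟩
    refine ⟨List.isChain_cons.mpr ⟨fun e he => (hh e he).symm, hc⟩, fun e he => ?_⟩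
    simp only [List.head?_cons, Option.mem_def, Option.some.injEq] at he
    exact he ▸ ha

lemma pathFrom_append_iff {q : A.V} {l l' : List A.E} :
    A.PathFrom q (l ++ l') ↔ A.PathFrom q l ∧ A.PathFrom (A.pathTarget q l) l' := by
  induction l generalizing q with
  | nil => simp [pathFrom_nil]
  | cons a l ih => simp only [List.cons_append, pathFrom_cons_iff, pathTarget_cons, ih, and_assoc]

lemma reach_cons {q w : A.V} {e : A.E} (hs : A.s e = q) (h : A.Reach (A.t e) w) :
    A.Reach q w :=
  let ⟨l, hl, ht⟩ := h
  ⟨e :: l, pathFrom_cons_iff.2 ⟨hs, hl⟩, ht⟩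

lemma reach_induction {q w : A.V} {P : A.V → Prop} (h₀ : P q)
    (hstep : ∀ e, A.Reach q (A.s e) → P (A.s e) → P (A.t e)) (hw : A.Reach q w) : P w := by
  obtain ⟨l, hl, rfl⟩ := hw
  induction l generalizing q with
  | nil => exact h₀
  | cons a l ih =>
    obtain ⟨rfl, hl'⟩ := pathFrom_cons_iff.1 hl
    exact ih (hstep a (A.reach_self _) h₀) (fun e he => hstep e (reach_cons rfl he)) hl'

lemma subgraph_connected (q : A.V) : (A.subgraph q).Connected := by
  rintro ⟨w, hw⟩
  let P (w : A.V) : Prop := ∃ hw, (A.subgraph q).Reach (A.subgraph q).root ⟨w, hw⟩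
  refine (reach_induction (P := P) ⟨A.reach_self q, reach_self _ _⟩ (fun e hqe h => ?_) hw).2
  exact ⟨reach_target hqe, reach_target (A := A.subgraph q) (e := ⟨e, hqe⟩) h.2⟩

lemma cover_reach_iff_prefix {γ δ : A.cover.V} : A.cover.Reach γ δ ↔ γ.1 <+: δ.1 := by
  constructor
  · exact reach_induction (P := fun δ : A.cover.V => γ.1 <+: δ.1) (List.prefix_refl _)
      fun (e : A.cover.E) _ h => h.trans (List.prefix_append _ [e.1.2])
  · rintro ⟨m, hm⟩
    induction m generalizing γ with
    | nil => exact Subtype.ext (by simpa using hm) ▸ reach_self _ _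
    | cons e m ih =>
      have hs : A.s e = A.pathTarget A.root γ.1 := by
        have := δ.2
        rw [← hm, pathFrom_append_iff, pathFrom_cons_iff] at this
        exact this.2.1
      exact reach_cons (e := ⟨(γ, e), hs⟩) rfl (ih ((List.append_assoc _ _ _).trans hm))

end RGraph

namespace GraphHom

@[ext] lemma ext {A B : RGraph} {p p' : GraphHom A B} (hv : p.v = p'.v) (he : p.e = p'.e) :
    p = p' := by
  cases p; cases p'; cases hv; cases he; rfl

def id (A : RGraph) : GraphHom A A where
  v := fun x => x
  e := fun x => x
  root_eq := rfl
  s_eq := fun _ => rfl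
  t_eq := fun _ => rfl

def comp {A B C : RGraph} (p' : GraphHom B C) (p : GraphHom A B) : GraphHom A C where
  v := p'.v ∘ p.v
  e := p'.e ∘ p.e
  root_eq := by simp only [Function.comp_apply, p.root_eq, p'.root_eq]
  s_eq := fun x => by simp only [Function.comp_apply, p'.s_eq, p.s_eq]
  t_eq := fun x => by simp only [Function.comp_apply, p'.t_eq, p.t_eq]

lemma isIso_iff {A B : RGraph} (p : GraphHom A B) :
    p.IsIso ↔ ∃ p' : GraphHom B A, p'.comp p = .id A ∧ p.comp p' = .id B := by
  constructor
  · rintro ⟨hv, he⟩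
    let ev := Equiv.ofBijective p.v hv
    let ee := Equiv.ofBijective p.e he
    have hs : ∀ f, A.s (ee.symm f) = ev.symm (B.s f) := fun f => ev.injective <| by
      simp only [ev, Equiv.ofBijective_apply, Equiv.ofBijective_apply_symm_apply, ← p.s_eq]
      exact congrArg B.s (ee.apply_symm_apply f)
    have ht : ∀ f, A.t (ee.symm f) = ev.symm (B.t f) := fun f => ev.injective <| by
      simp only [ev, Equiv.ofBijective_apply, Equiv.ofBijective_apply_symm_apply, ← p.t_eq]
      exact congrArg B.t (ee.apply_symm_apply f)
    refine ⟨⟨ev.symm, ee.symm, ev.symm_apply_eq.2 p.root_eq.symm, hs, ht⟩, ?_, ?_⟩ <;>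
      ext x <;> simp [comp, id, ev, ee, Equiv.ofBijective_apply_symm_apply]
  · rintro ⟨p', h₁, h₂⟩
    exact ⟨Function.bijective_iff_has_inverse.2
        ⟨p'.v, congrFun (congrArg v h₁), congrFun (congrArg v h₂)⟩,
      Function.bijective_iff_has_inverse.2
        ⟨p'.e, congrFun (congrArg e h₁), congrFun (congrArg e h₂)⟩⟩

lemma ext_of_label {S B : RGraph} (hS : S.Connected) {L : Type*} (label : B.E → L)
    (hlabel : ∀ x y, B.s x = B.s y → label x = label y → x = y) {f g : GraphHom S B}
    (h : ∀ x, label (f.e x) = label (g.e x)) : f = g := by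
  have he : ∀ x, f.v (S.s x) = g.v (S.s x) → f.e x = g.e x := fun x hx =>
    hlabel _ _ (by rw [f.s_eq, g.s_eq, hx]) (h x)
  have hv : ∀ w, f.v w = g.v w := fun w =>
    RGraph.reach_induction (P := fun w => f.v w = g.v w) (by rw [f.root_eq, g.root_eq])
      (fun x _ hx => by rw [← f.t_eq, ← g.t_eq, he x hx]) (hS w)
  exact GraphHom.ext (funext hv) (funext fun x => he x (hv _))

section ConeMap

variable {A : RGraph} {q r : A.V} (p : GraphHom (A.subgraph q) (A.subgraph r))

open Classical in
noncomputable def extendV (v : A.V) : A.V :=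
  if h : A.Reach q v then (p.v ⟨v, h⟩).1 else v

open Classical in
/-- `p.e` extended by the identity outside the cone `A_q`, so that it can be mapped over
lists of edges of `A`. -/
noncomputable def extendE (e : A.E) : A.E :=
  if h : A.Reach q (A.s e) then (p.e ⟨e, h⟩).1 else e

lemma extendV_of_reach {v : A.V} (h : A.Reach q v) : p.extendV v = (p.v ⟨v, h⟩).1 :=
  dif_pos h

lemma extendE_of_reach {e : A.E} (h : A.Reach q (A.s e)) : p.extendE e = (p.e ⟨e, h⟩).1 :=
  dif_pos h

lemma extendV_self : p.extendV q = r := by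
  rw [extendV_of_reach p (A.reach_self q)]
  exact congrArg Subtype.val p.root_eq

lemma s_extendE {e : A.E} (h : A.Reach q (A.s e)) : A.s (p.extendE e) = p.extendV (A.s e) := by
  rw [extendE_of_reach p h, extendV_of_reach p h]
  exact congrArg Subtype.val (p.s_eq _)

lemma t_extendE {e : A.E} (h : A.Reach q (A.s e)) : A.t (p.extendE e) = p.extendV (A.t e) := by
  rw [extendE_of_reach p h, extendV_of_reach p (RGraph.reach_target h)]
  exact congrArg Subtype.val (p.t_eq _)

lemma pathFrom_map_extendE {v : A.V} {m : List A.E} (hv : A.Reach q v) (hm : A.PathFrom v m) :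
    A.PathFrom (p.extendV v) (m.map p.extendE) := by
  induction m generalizing v with
  | nil => exact A.pathFrom_nil _
  | cons a m ih =>
    obtain ⟨rfl, hm'⟩ := RGraph.pathFrom_cons_iff.1 hm
    exact RGraph.pathFrom_cons_iff.2
      ⟨p.s_extendE hv, p.t_extendE hv ▸ ih (RGraph.reach_target hv) hm'⟩

lemma pathTarget_map_extendE {v : A.V} {m : List A.E} (hv : A.Reach q v)
    (hm : A.PathFrom v m) :
    A.pathTarget (p.extendV v) (m.map p.extendE) = p.extendV (A.pathTarget v m) := by
  induction m generalizing v with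
  | nil => rfl
  | cons a m ih =>
    obtain ⟨rfl, hm'⟩ := RGraph.pathFrom_cons_iff.1 hm
    simp only [List.map_cons, RGraph.pathTarget_cons, p.t_extendE hv]
    exact ih (RGraph.reach_target hv) hm'

lemma extendE_id : (GraphHom.id (A.subgraph q)).extendE = fun e => e := by
  funext e
  by_cases h : A.Reach q (A.s e) <;> simp [extendE, h, GraphHom.id]

lemma extendE_extendE {u : A.V} (p' : GraphHom (A.subgraph r) (A.subgraph u)) {e : A.E}
    (h : A.Reach q (A.s e)) : p'.extendE (p.extendE e) = (p'.comp p).extendE e := by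
  rw [p.extendE_of_reach h, (p'.comp p).extendE_of_reach h, p'.extendE_of_reach (p.e ⟨e, h⟩).2]
  rfl

end ConeMap

end GraphHom

namespace RGraph

variable {A : RGraph} {γ γ' γ'' : A.cover.V}

lemma cover_subgraph_edge_eq {x y : (A.cover.subgraph γ).E}
    (hs : (A.cover.subgraph γ).s x = (A.cover.subgraph γ).s y)
    (hl : A.uCover.e x.1 = A.uCover.e y.1) : x = y :=
  Subtype.ext (Subtype.ext (Prod.ext (congrArg Subtype.val hs) hl))

lemma reach_s_uCover_e (x : (A.cover.subgraph γ).E) :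
    A.Reach (A.uCover.v γ) (A.s (A.uCover.e x.1)) := by
  rw [A.uCover.s_eq]
  exact A.uCover.reach_map x.2

/-- The vertex `x = γ ++ m` of the cone `T_γ`, seen as the path `m` from `π γ`. -/
def coneTail (x : (A.cover.subgraph γ).V) : List A.E := x.1.1.drop γ.1.length

lemma append_coneTail (x : (A.cover.subgraph γ).V) : γ.1 ++ coneTail x = x.1.1 :=
  List.prefix_iff_eq_append.1 (cover_reach_iff_prefix.1 x.2)

lemma coneTail_eq {x : (A.cover.subgraph γ).V} {m : List A.E} (h : x.1.1 = γ.1 ++ m) :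
    coneTail x = m := by
  rw [coneTail, h, List.drop_left]

lemma pathFrom_coneTail (x : (A.cover.subgraph γ).V) :
    A.PathFrom (A.uCover.v γ) (coneTail x) := by
  have := x.1.2
  rw [← append_coneTail x, pathFrom_append_iff] at this
  exact this.2

lemma pathTarget_coneTail (x : (A.cover.subgraph γ).V) :
    A.pathTarget (A.uCover.v γ) (coneTail x) = A.uCover.v x.1 := by
  show _ = A.pathTarget A.root x.1.1
  rw [← append_coneTail x, pathTarget_append]
  rfl

variable (g₀ : GraphHom (A.subgraph (A.uCover.v γ)) (A.subgraph (A.uCover.v γ')))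

noncomputable def coneLiftV (x : (A.cover.subgraph γ).V) : (A.cover.subgraph γ').V :=
  ⟨⟨γ'.1 ++ (coneTail x).map g₀.extendE, pathFrom_append_iff.2 ⟨γ'.2, by
      have := g₀.pathFrom_map_extendE (A.reach_self _) (pathFrom_coneTail x)
      rwa [g₀.extendV_self] at this⟩⟩,
    cover_reach_iff_prefix.2 (List.prefix_append _ _)⟩

lemma uCover_coneLiftV (x : (A.cover.subgraph γ).V) :
    A.uCover.v (coneLiftV g₀ x).1 = g₀.extendV (A.uCover.v x.1) := by
  show A.pathTarget A.root (γ'.1 ++ _) = _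
  rw [pathTarget_append]
  have := g₀.pathTarget_map_extendE (A.reach_self _) (pathFrom_coneTail x)
  rwa [g₀.extendV_self, pathTarget_coneTail] at this

noncomputable def coneLift : GraphHom (A.cover.subgraph γ) (A.cover.subgraph γ') where
  v := coneLiftV g₀
  e := fun x => ⟨⟨((coneLiftV g₀ ((A.cover.subgraph γ).s x)).1, g₀.extendE x.1.1.2), by
      show A.s (g₀.extendE (A.uCover.e x.1)) = A.uCover.v (coneLiftV g₀ _).1
      rw [g₀.s_extendE (reach_s_uCover_e x), uCover_coneLiftV]
      exact congrArg g₀.extendV (A.uCover.s_eq x.1)⟩,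
    (coneLiftV g₀ _).2⟩
  root_eq := by
    have : coneTail (A.cover.subgraph γ).root = [] := coneTail_eq (List.append_nil _).symm
    refine Subtype.ext (Subtype.ext ?_)
    show γ'.1 ++ _ = γ'.1
    rw [this, List.map_nil, List.append_nil]
  s_eq := fun _ => rfl
  t_eq := fun x => by
    have : coneTail ((A.cover.subgraph γ).t x)
        = coneTail ((A.cover.subgraph γ).s x) ++ [x.1.1.2] := by
      refine coneTail_eq ?_
      rw [← List.append_assoc, append_coneTail]
      rfl
    refine Subtype.ext (Subtype.ext ?_)
    show _ ++ _ = _ ++ _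
    simp only [coneLiftV, this, List.map_append, List.append_assoc, List.map_singleton]

lemma uCover_coneLift_e (x : (A.cover.subgraph γ).E) :
    A.uCover.e ((coneLift g₀).e x).1 = g₀.extendE (A.uCover.e x.1) :=
  rfl

lemma eq_coneLift {g : GraphHom (A.cover.subgraph γ) (A.cover.subgraph γ')}
    (h : ∀ x, A.uCover.e (g.e x).1 = g₀.extendE (A.uCover.e x.1)) : g = coneLift g₀ :=
  GraphHom.ext_of_label (subgraph_connected γ)
    (fun x : (A.cover.subgraph γ').E => A.uCover.e x.1)
    (fun _ _ hs hl => cover_subgraph_edge_eq hs hl) h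

lemma coneLift_id : coneLift (GraphHom.id (A.subgraph (A.uCover.v γ))) = .id _ :=
  (eq_coneLift _ fun x => by rw [GraphHom.extendE_id]; rfl).symm

lemma coneLift_comp (g₁ : GraphHom (A.subgraph (A.uCover.v γ')) (A.subgraph (A.uCover.v γ''))) :
    (coneLift g₁).comp (coneLift g₀) = coneLift (g₁.comp g₀) :=
  eq_coneLift _ fun x => g₀.extendE_extendE g₁ (reach_s_uCover_e x)

lemma isIso_coneLift (hg₀ : g₀.IsIso) : (coneLift g₀).IsIso := by
  obtain ⟨g₀', h₁, h₂⟩ := (g₀.isIso_iff).1 hg₀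
  exact (GraphHom.isIso_iff _).2 ⟨coneLift g₀', by rw [coneLift_comp, h₁, coneLift_id],
    by rw [coneLift_comp, h₂, coneLift_id]⟩

end RGraph

/-- Lifting isomorphisms of cones. Let `A` be connected with
universal covering `π : T → A`, let `γ, γ'` be vertices of `T = T_A` and put
`q = π₀(γ)`, `q' = π₀(γ')`. Every rooted isomorphism `g₀ : A_q → A_{q'}` lifts to a
unique rooted isomorphism `g : T_γ → T_{γ'}` with `π ∘ g = g₀ ∘ π`. -/
theorem stmt6 (A : RGraph) (γ γ' : A.cover.V)
    (g₀ : GraphHom (A.subgraph (A.uCover.v γ)) (A.subgraph (A.uCover.v γ')))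
    (hg₀ : g₀.IsIso) :
    ∃! g : GraphHom (A.cover.subgraph γ) (A.cover.subgraph γ'),
      g.IsIso ∧
      (∀ x : (A.cover.subgraph γ).V,
        A.uCover.v (g.v x).1 = (g₀.v ⟨A.uCover.v x.1, A.uCover.reach_map x.2⟩).1) ∧
      (∀ x : (A.cover.subgraph γ).E,
        A.uCover.e (g.e x).1 = (g₀.e ⟨A.uCover.e x.1, by
          rw [A.uCover.s_eq]; exact A.uCover.reach_map x.2⟩).1) := by
  refine ⟨RGraph.coneLift g₀,
    ⟨RGraph.isIso_coneLift g₀ hg₀, fun x => ?_, fun x => ?_⟩, ?_⟩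
  · exact (RGraph.uCover_coneLiftV g₀ x).trans (g₀.extendV_of_reach _)
  · exact (RGraph.uCover_coneLift_e g₀ x).trans (g₀.extendE_of_reach _)
  · rintro g ⟨-, -, hg⟩
    exact RGraph.eq_coneLift g₀ fun x => (hg x).trans (g₀.extendE_of_reach _).symm
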